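/- arXiv:2004.03890 — 2 statements merged into one kernel-verified Lean document; each statement's English description precedes it below -/
import Mathlib

section
/- Every permutation of cycle type 3^2 in A_12 is the product of two involutions of cycle type 2^6 in A_12. -/
/-!
All permutations of cycle type `3²` are conjugate in `S₁₂`, and conjugation preserves cycle types,
so one factorisation suffices. For `(0 1 2)(3 4 5)` take two fixed-point-free involutions that
interchange the blocks `{0, 1, 2}` and `{3, 4, 5}` and agree on the other six points; their product
maps each block to itself.
-/

open Equiv Equiv.Perm

theorem IsConj.exists_isConj_mul {G : Type*} [Group G] {a b g : G} (h : IsConj (a * b) g) :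
    ∃ a' b', IsConj a a' ∧ IsConj b b' ∧ g = a' * b' := by
  obtain ⟨c, rfl⟩ := isConj_iff.mp h
  exact ⟨c * a * c⁻¹, c * b * c⁻¹, isConj_iff.mpr ⟨c, rfl⟩, isConj_iff.mpr ⟨c, rfl⟩, by group⟩

namespace Equiv.Perm

variable {α : Type*} [Fintype α] [DecidableEq α]

theorem cycleType_eq_replicate_card_support_div {σ : Perm α} {p : ℕ} [hp : Fact p.Prime]
    (hσ : σ ^ p = 1) : σ.cycleType = Multiset.replicate (σ.support.card / p) p := by
  have hσ' := cycleType_of_pow_prime_eq_one hσ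
  have hcard : σ.support.card = Multiset.card σ.cycleType * p := by
    rw [← sum_cycleType, hσ', Multiset.sum_replicate, smul_eq_mul, Multiset.card_replicate]
  rwa [hcard, Nat.mul_div_cancel _ hp.out.pos]

theorem mem_alternatingGroup_of_cycleType_eq_replicate_two {σ : Perm α} {n : ℕ} (hn : Even n)
    (hσ : σ.cycleType = Multiset.replicate n 2) : σ ∈ alternatingGroup α := by
  rw [mem_alternatingGroup, sign_of_cycleType', hσ, Multiset.map_replicate,
    Multiset.prod_replicate]
  norm_num [hn.neg_one_pow]

end Equiv.Perm

def g₀ : Perm (Fin 12) := c[0, 1, 2] * c[3, 4, 5]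

def s₀ : Perm (Fin 12) := c[0, 4] * c[1, 3] * c[2, 5] * c[6, 7] * c[8, 9] * c[10, 11]

def t₀ : Perm (Fin 12) := c[0, 3] * c[1, 5] * c[2, 4] * c[6, 7] * c[8, 9] * c[10, 11]

theorem g₀_eq_s₀_mul_t₀ : g₀ = s₀ * t₀ := by decide

theorem cycleType_g₀ : g₀.cycleType = {3, 3} := by
  rw [cycleType_eq_replicate_card_support_div (show g₀ ^ 3 = 1 by decide),
    show g₀.support.card = 6 by decide]
  rfl

theorem cycleType_s₀ : s₀.cycleType = Multiset.replicate 6 2 := by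
  rw [cycleType_eq_replicate_card_support_div (show s₀ ^ 2 = 1 by decide),
    show s₀.support.card = 12 by decide]

theorem cycleType_t₀ : t₀.cycleType = Multiset.replicate 6 2 := by
  rw [cycleType_eq_replicate_card_support_div (show t₀ ^ 2 = 1 by decide),
    show t₀.support.card = 12 by decide]

theorem threeCycleSquared_eq_product_2pow6_general (g : Equiv.Perm (Fin 12))
    (hg : g.cycleType = ({3, 3} : Multiset ℕ)) :
    ∃ s t : Equiv.Perm (Fin 12),
      s ∈ alternatingGroup (Fin 12) ∧ t ∈ alternatingGroup (Fin 12) ∧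
      s.cycleType = Multiset.replicate 6 2 ∧ t.cycleType = Multiset.replicate 6 2 ∧
      g = s * t := by
  have hconj : IsConj (s₀ * t₀) g := by
    rw [← g₀_eq_s₀_mul_t₀, isConj_iff_cycleType_eq, cycleType_g₀, hg]
  obtain ⟨s, t, hs, ht, rfl⟩ := hconj.exists_isConj_mul
  have hs' : s.cycleType = Multiset.replicate 6 2 := by
    rw [← isConj_iff_cycleType_eq.mp hs, cycleType_s₀]
  have ht' : t.cycleType = Multiset.replicate 6 2 := by
    rw [← isConj_iff_cycleType_eq.mp ht, cycleType_t₀]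
  exact ⟨s, t, mem_alternatingGroup_of_cycleType_eq_replicate_two (by decide) hs',
    mem_alternatingGroup_of_cycleType_eq_replicate_two (by decide) ht', hs', ht', rfl⟩

/-- Every permutation of cycle type `3²` in `A₁₂` is the product of two involutions of cycle
type `2⁶` in `A₁₂`. -/
theorem threeCycleSquared_eq_product_2pow6 (g : Equiv.Perm (Fin 12))
    (hgA : g ∈ alternatingGroup (Fin 12))
    (hg : g.cycleType = ({3, 3} : Multiset ℕ)) :
    ∃ s t : Equiv.Perm (Fin 12),
      s ∈ alternatingGroup (Fin 12) ∧ t ∈ alternatingGroup (Fin 12) ∧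
      s.cycleType = Multiset.replicate 6 2 ∧ t.cycleType = Multiset.replicate 6 2 ∧
      g = s * t :=
  threeCycleSquared_eq_product_2pow6_general g hg
end

section
/- In the Norton–Sakuma algebra of type 3A with basis {a_{-1}, a_0, a_1, u_ρ}, products a_0·a_1 = (1/2^5)(2a_0 + 2a_1 + a_{-1}) − (3^3·5/2^{11})u_ρ, a_0·u_ρ = (1/3^2)(2a_0 − a_1 − a_{-1}) + (5/2^5)u_ρ (and cyclic analogues permuting indices mod 3), u_ρ·u_ρ = u_ρ, and inner products (a_i,a_j) = 13/2^8 for i≠j, (a_i,u_ρ) = 1/4, (u_ρ,u_ρ) = 8/5, (a_i,a_i) = 1: the bilinear form associates with the product, i.e., (x·y, z) = (x, y·z) for all basis vectors x, y, z. -/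
/-- Structure constants of the Norton–Sakuma algebra of type `3A`, on the basis
`0 ↦ a₋₁`, `1 ↦ a₀`, `2 ↦ a₁`, `3 ↦ u_ρ`. -/
noncomputable def c3A : Fin 4 → Fin 4 → (Fin 4 → ℝ) :=
  ![![![1, 0, 0, 0], ![1/16, 1/16, 1/32, -135/2048],
     ![1/16, 1/32, 1/16, -135/2048], ![2/9, -1/9, -1/9, 5/32]],
    ![![1/16, 1/16, 1/32, -135/2048], ![0, 1, 0, 0],
     ![1/32, 1/16, 1/16, -135/2048], ![-1/9, 2/9, -1/9, 5/32]],
    ![![1/16, 1/32, 1/16, -135/2048], ![1/32, 1/16, 1/16, -135/2048],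
     ![0, 0, 1, 0], ![-1/9, -1/9, 2/9, 5/32]],
    ![![2/9, -1/9, -1/9, 5/32], ![-1/9, 2/9, -1/9, 5/32],
     ![-1/9, -1/9, 2/9, 5/32], ![0, 0, 0, 1]]]

/-- The bilinear product of the Norton–Sakuma algebra of type `3A`. -/
noncomputable def mul3A (u v : Fin 4 → ℝ) : Fin 4 → ℝ :=
  fun k => ∑ i, ∑ j, u i * v j * c3A i j k

/-- The Gram matrix of the inner product of the Norton–Sakuma algebra of type `3A`. -/
noncomputable def B3A : Fin 4 → Fin 4 → ℝ :=
  ![![1, 13/256, 13/256, 1/4], ![13/256, 1, 13/256, 1/4],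
    ![13/256, 13/256, 1, 1/4], ![1/4, 1/4, 1/4, 8/5]]

/-- The inner product of the Norton–Sakuma algebra of type `3A`. -/
noncomputable def form3A (u v : Fin 4 → ℝ) : ℝ :=
  ∑ i, ∑ j, u i * v j * B3A i j

/-!
Both sides of `(x·y, z) = (x, y·z)` are trilinear, so for any algebra given by structure
constants `c` and a Gram matrix `B` the identity holds as soon as it holds on basis vectors,
i.e. `∑ l, c i j l * B l k = ∑ l, B i l * c j k l`. For type `3A` these are 64 identities
between rational numbers.
-/

namespace StructureConstants

open Finset

variable {ι R : Type*} [Fintype ι] [CommSemiring R]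

def mul (c : ι → ι → ι → R) (u v : ι → R) : ι → R :=
  fun k => ∑ i, ∑ j, u i * v j * c i j k

def form (B : ι → ι → R) (u v : ι → R) : R :=
  ∑ i, ∑ j, u i * v j * B i j

theorem form_mul_left (c : ι → ι → ι → R) (B : ι → ι → R) (x y z : ι → R) :
    form B (mul c x y) z = ∑ i, ∑ j, ∑ k, x i * y j * z k * ∑ l, c i j l * B l k := by
  simp only [form, mul, sum_mul]
  conv_lhs => enter [2, k]; rw [← sum_comm_cycle]
  rw [← sum_comm_cycle]
  refine sum_congr rfl fun i _ => sum_congr rfl fun j _ => ?_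
  rw [sum_comm]
  refine sum_congr rfl fun k _ => ?_
  rw [mul_sum]
  exact sum_congr rfl fun l _ => by ring

theorem form_mul_right (c : ι → ι → ι → R) (B : ι → ι → R) (x y z : ι → R) :
    form B x (mul c y z) = ∑ i, ∑ j, ∑ k, x i * y j * z k * ∑ l, B i l * c j k l := by
  simp only [form, mul, sum_mul, mul_sum]
  refine sum_congr rfl fun i _ => ?_
  rw [← sum_comm_cycle]
  exact sum_congr rfl fun j _ => sum_congr rfl fun k _ => sum_congr rfl fun l _ => by ring

theorem form_mul_assoc_of_basis {c : ι → ι → ι → R} {B : ι → ι → R}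
    (h : ∀ i j k, ∑ l, c i j l * B l k = ∑ l, B i l * c j k l) (x y z : ι → R) :
    form B (mul c x y) z = form B x (mul c y z) := by
  simp only [form_mul_left, form_mul_right, h]

end StructureConstants

theorem c3A_B3A_invariant (i j k : Fin 4) :
    ∑ l, c3A i j l * B3A l k = ∑ l, B3A i l * c3A j k l := by
  fin_cases i <;> fin_cases j <;> fin_cases k <;>
    simp [Fin.sum_univ_four, c3A, B3A] <;> norm_num

/-- In the Norton–Sakuma algebra of type `3A`, the bilinear form associates with the
algebra product: `(x·y, z) = (x, y·z)`. -/
theorem form3A_assoc (x y z : Fin 4 → ℝ) :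
    form3A (mul3A x y) z = form3A x (mul3A y z) :=
  StructureConstants.form_mul_assoc_of_basis c3A_B3A_invariant x y z
end
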